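/- If m_1,...,m_r are the minimal generators of a monomial ideal in d variables (i.e., the exponent vectors form an antichain), then every face I of the Scarf complex Δ_M satisfies |I| ≤ d, i.e., dim Δ_M ≤ d − 1. -/

import Mathlib

/-!
Removing a generator `i` from a face `I` must change the lcm `m_I`, so some coordinate `k`
of `α i` strictly exceeds that coordinate of every other `α j`, `j ∈ I`. Such a `k` cannot
serve two different generators, so `i ↦ k` injects `I` into the `d` coordinates.
-/

namespace Finset

variable {ι κ α : Type*} [DecidableEq ι] [LinearOrder α] [OrderBot α]

theorem lt_of_sup_erase_ne {s : Finset ι} {f : ι → α} {i : ι} (hi : i ∈ s)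
    (hne : (s.erase i).sup f ≠ s.sup f) {j : ι} (hj : j ∈ s) (hji : j ≠ i) : f j < f i := by
  have hsup : s.sup f = f i ⊔ (s.erase i).sup f := by
    conv_lhs => rw [← insert_erase hi]
    exact sup_insert
  have herase_lt : (s.erase i).sup f < f i := by
    by_contra! hle
    exact hne (by rw [hsup, sup_eq_right.mpr hle])
  exact (le_sup (mem_erase.mpr ⟨hji, hj⟩)).trans_lt herase_lt

theorem exists_forall_lt_of_sup_erase_ne {s : Finset ι} {f : ι → κ → α} {i : ι} (hi : i ∈ s)
    (hne : (s.erase i).sup f ≠ s.sup f) : ∃ k, ∀ j ∈ s, j ≠ i → f j k < f i k := by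
  obtain ⟨k, hk⟩ := Function.ne_iff.mp hne
  rw [Finset.sup_apply, Finset.sup_apply] at hk
  exact ⟨k, fun j hj hji => lt_of_sup_erase_ne hi hk hj hji⟩

end Finset

theorem Finset.card_le_card_of_forall_exists_forall_lt {ι κ α : Type*} [Fintype κ]
    [Preorder α] {s : Finset ι} {f : ι → κ → α}
    (h : ∀ i ∈ s, ∃ k, ∀ j ∈ s, j ≠ i → f j k < f i k) : s.card ≤ Fintype.card κ := by
  choose g hg using fun i : s => h i i.2
  have hg_inj : Function.Injective g := by
    intro i j hij
    by_contra hne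
    have hji := hg i j j.2 (Subtype.coe_ne_coe.mpr (Ne.symm hne))
    have hij' := hg j i i.2 (Subtype.coe_ne_coe.mpr hne)
    rw [hij] at hji
    exact lt_asymm hji hij'
  simpa using Fintype.card_le_of_injective g hg_inj

theorem stmt_12_general {d r : ℕ} (α : Fin r → (Fin d → ℕ))
    (mI : Finset (Fin r) → (Fin d → ℕ))
    (hmI : ∀ I, mI I = fun k => I.sup (fun i => α i k)) :
    ∀ I : Finset (Fin r),
      (∀ J : Finset (Fin r), mI J = mI I → J = I) → I.card ≤ d := by
  intro I hI
  have hmI_sup : ∀ J, mI J = J.sup α := fun J => by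
    rw [hmI]
    exact funext fun k => (Finset.sup_apply J α k).symm
  have hexposed : ∀ i ∈ I, ∃ k, ∀ j ∈ I, j ≠ i → α j k < α i k := by
    intro i hi
    refine Finset.exists_forall_lt_of_sup_erase_ne hi fun heq => ?_
    have herase : I.erase i = I := hI _ (by rw [hmI_sup, hmI_sup, heq])
    exact (Finset.erase_ssubset hi).ne herase
  simpa using Finset.card_le_card_of_forall_exists_forall_lt hexposed

/-- If the exponent vectors of the minimal generators form an antichain in
`ℕ^d`, then every face of the Scarf complex has at most `d` elements. -/
theorem stmt_12 {d r : ℕ} (α : Fin r → (Fin d → ℕ))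
    (hanti : ∀ i j, i ≠ j → ¬ α i ≤ α j)
    (mI : Finset (Fin r) → (Fin d → ℕ))
    (hmI : ∀ I, mI I = fun k => I.sup (fun i => α i k)) :
    ∀ I : Finset (Fin r),
      (∀ J : Finset (Fin r), mI J = mI I → J = I) → I.card ≤ d :=
  stmt_12_general α mI hmI
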